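/- Let Ω = [c,d] ⊂ ℝ be a compact interval, let F : Ω → [a,b] be a nondecreasing function, and define F⁻¹ : [a,b] → ℝ by F⁻¹(t) = inf{u ∈ Ω : F(u) ≥ t}. Then F is continuous on Ω if and only if F⁻¹ is strictly increasing on the interval [inf ran F, sup ran F], where ran F = {F(x) : x ∈ Ω}. -/

import Mathlib

/-!
A monotone `F` on `[c, d]` is continuous exactly when it has no jumps, i.e. when it maps
`[c, d]` onto `[F c, F d]`. The generalized inverse `F⁻¹` is a Galois-type inverse of `F`:
`F⁻¹ t ≤ u` when `t ≤ F u`, and `u ≤ F⁻¹ t` when `F u < t`. A jump of `F` over a value `t`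
makes `F⁻¹` constant on an interval ending at `t` or starting at `t`; conversely, if every value
is taken, two values `t₁ < t₂` are attained at points `u₁ < u₂` with `F u₁ = t₁` and
`t₁ < F u₂ < t₂`, so that `F⁻¹ t₁ ≤ u₁ < u₂ ≤ F⁻¹ t₂`.
-/

open Set

theorem MonotoneOn.continuousOn_of_surjOn {α β : Type*} [LinearOrder α] [TopologicalSpace α]
    [OrderTopology α] [LinearOrder β] [TopologicalSpace β] [OrderTopology β] [DenselyOrdered β]
    {f : α → β} {s : Set α} {t : Set β} [s.OrdConnected] [t.OrdConnected]
    (hf : MonotoneOn f s) (hmaps : MapsTo f s t) (hsurj : SurjOn f s t) : ContinuousOn f s := by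
  have hcont : Continuous (hmaps.restrict f s t) :=
    Monotone.continuous_of_surjective (fun x y hxy => hf x.2 y.2 hxy)
      (hmaps.restrict_surjective_iff.2 hsurj)
  exact continuousOn_iff_continuous_domRestrict.2 (continuous_subtype_val.comp hcont)

theorem MonotoneOn.continuousOn_Icc_iff_surjOn {α β : Type*} [ConditionallyCompleteLinearOrder α]
    [TopologicalSpace α] [OrderTopology α] [DenselyOrdered α] [LinearOrder β] [TopologicalSpace β]
    [OrderTopology β] [DenselyOrdered β] {f : α → β} {c d : α} (hcd : c ≤ d)
    (hf : MonotoneOn f (Icc c d)) :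
    ContinuousOn f (Icc c d) ↔ SurjOn f (Icc c d) (Icc (f c) (f d)) :=
  ⟨intermediate_value_Icc hcd,
    hf.continuousOn_of_surjOn hf.mapsTo_Icc⟩

noncomputable def quantile {α β : Type*} [ConditionallyCompleteLinearOrder α] [LE β]
    (f : α → β) (c d : α) (t : β) : α :=
  sInf {u ∈ Icc c d | t ≤ f u}

section Quantile

variable {α β : Type*} [ConditionallyCompleteLinearOrder α] [LinearOrder β]
  {f : α → β} {c d u : α} {t : β}

theorem quantile_le (hu : u ∈ Icc c d) (ht : t ≤ f u) : quantile f c d t ≤ u :=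
  csInf_le ⟨c, fun _ hv => hv.1.1⟩ ⟨hu, ht⟩

theorem le_quantile (hf : MonotoneOn f (Icc c d)) (hu : u ∈ Icc c d) (hut : f u < t)
    (htd : t ≤ f d) : u ≤ quantile f c d t :=
  le_csInf ⟨d, ⟨hu.1.trans hu.2, le_rfl⟩, htd⟩ fun _ hv =>
    le_of_not_gt fun hvu => (hf hv.1 hu hvu.le).not_gt (hut.trans_le hv.2)

theorem quantile_mem_Icc (hcd : c ≤ d) (htd : t ≤ f d) : quantile f c d t ∈ Icc c d :=
  ⟨le_csInf ⟨d, right_mem_Icc.2 hcd, htd⟩ fun _ hv => hv.1.1,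
    quantile_le (right_mem_Icc.2 hcd) htd⟩

theorem MonotoneOn.strictMonoOn_quantile [DenselyOrdered β] (hf : MonotoneOn f (Icc c d))
    (hsurj : SurjOn f (Icc c d) (Icc (f c) (f d))) :
    StrictMonoOn (quantile f c d) (Icc (f c) (f d)) := by
  intro t₁ ht₁ t₂ ht₂ h₁₂
  obtain ⟨m, ht₁m, hmt₂⟩ := exists_between h₁₂
  obtain ⟨u₁, hu₁, rfl⟩ := hsurj ht₁
  obtain ⟨u₂, hu₂, rfl⟩ := hsurj ⟨ht₁.1.trans ht₁m.le, hmt₂.le.trans ht₂.2⟩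
  calc quantile f c d (f u₁) ≤ u₁ := quantile_le hu₁ le_rfl
    _ < u₂ := hf.reflect_lt hu₁ hu₂ ht₁m
    _ ≤ quantile f c d t₂ := le_quantile hf hu₂ hmt₂ ht₂.2

theorem MonotoneOn.surjOn_of_strictMonoOn_quantile [DenselyOrdered β]
    (hf : MonotoneOn f (Icc c d)) (hcd : c ≤ d)
    (hq : StrictMonoOn (quantile f c d) (Icc (f c) (f d))) :
    SurjOn f (Icc c d) (Icc (f c) (f d)) := by
  intro t ht
  set x := quantile f c d t
  have hx : x ∈ Icc c d := quantile_mem_Icc hcd ht.2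
  refine ⟨x, hx, ?_⟩
  rcases lt_trichotomy (f x) t with hlt | heq | hgt
  · obtain ⟨m, hxm, hmt⟩ := exists_between hlt
    have hm : m ∈ Icc (f c) (f d) := ⟨(hf ⟨le_rfl, hcd⟩ hx hx.1).trans hxm.le, hmt.le.trans ht.2⟩
    exact absurd (le_quantile hf hx hxm hm.2) (hq hm ht hmt).not_ge
  · exact heq
  · have hfx : f x ∈ Icc (f c) (f d) := hf.mapsTo_Icc hx
    exact absurd (quantile_le hx le_rfl) (hq ht hfx hgt).not_ge

end Quantile

/-- Let `Ω = [c,d]` be a compact interval of `ℝ`, `F : Ω → [a,b]` a nondecreasing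
function and `F⁻¹(t) = inf {u ∈ Ω : F(u) ≥ t}` its generalized inverse on `[a,b]`.
Then `F` is continuous on `Ω` if and only if `F⁻¹` is strictly increasing on
`[inf ran F, sup ran F]`, where `ran F = F '' Ω`. -/
theorem continuousOn_iff_strictMonoOn_quantile (c d a b : ℝ) (hcd : c ≤ d)
    (F : ℝ → ℝ) (hmono : MonotoneOn F (Set.Icc c d))
    (hmaps : Set.MapsTo F (Set.Icc c d) (Set.Icc a b))
    (Finv : ℝ → ℝ)
    (hFinv : ∀ t ∈ Set.Icc a b, Finv t = sInf {u ∈ Set.Icc c d | t ≤ F u}) :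
    ContinuousOn F (Set.Icc c d) ↔
      StrictMonoOn Finv
        (Set.Icc (sInf (F '' Set.Icc c d)) (sSup (F '' Set.Icc c d))) := by
  have hc : c ∈ Icc c d := left_mem_Icc.2 hcd
  have hd : d ∈ Icc c d := right_mem_Icc.2 hcd
  have hinf : sInf (F '' Icc c d) = F c := (hmono.map_isLeast (isLeast_Icc hcd)).csInf_eq
  have hsup : sSup (F '' Icc c d) = F d := (hmono.map_isGreatest (isGreatest_Icc hcd)).csSup_eq
  have hFinv_eq : EqOn Finv (quantile F c d) (Icc (F c) (F d)) := fun t ht =>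
    hFinv t ⟨(hmaps hc).1.trans ht.1, ht.2.trans (hmaps hd).2⟩
  rw [hinf, hsup, hmono.continuousOn_Icc_iff_surjOn hcd]
  exact ⟨fun hsurj => (hmono.strictMonoOn_quantile hsurj).congr hFinv_eq.symm,
    fun hq => hmono.surjOn_of_strictMonoOn_quantile hcd (hq.congr hFinv_eq)⟩
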